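/- Let a ≥ 2 be an integer, let 𝒳 ⊆ {1,…,a}^ℤ be a closed shift-invariant subset with the left shift σ, and let μ be a σ-invariant probability measure on 𝒳 which is ψ-mixing with rates (ψ_Δ). Let U ⊆ 𝒳 be measurable with respect to the coordinates {0,…,n−1} with ε := μ(U) > 0, whose minimal return time η satisfies η ≥ n, and let τ(x) = inf{k ≥ 1 : σ^k x ∈ U}. Fix t > 0 and set N = ⌊t/ε⌋, and for q ≥ 0 put p_q := (1−ε)^{N−q−1}( μ{τ > q+1} − (1−ε)·μ{τ > q} ). Then S_2(N) := Σ_{q=n}^{N−1} p_q ≤ 4(n+1)(t+1)·ε + (t+1)·ψ_n + N·ε²·Σ_{i=0}^{n−1} ψ_i. -/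

import Mathlib

/-!
Write `T q = {τ > q}` and `B = σ^{-(q+1)} U`. Since `T (q+1) = T q \ B`, the bracket in the
`q`-th term of `S₂(N)` equals `ε μ(T q) - μ(T q ∩ B)`. Dropping the last `2n` constraints from
`T q` leaves, up to one shift, the set `A = {σ^k x ∉ U for k < q - 2n}`, which depends only on the
coordinates below `q - n`; so ψ-mixing across the gap `n` gives
`μ(A ∩ σ^{-q} U) ≥ (1 - ψ_n) ε μ(A)`. The dropped constraints cost at most
`∑_{1 ≤ d ≤ 2n} μ(U ∩ σ^{-d} U)`: the terms with `d < n` vanish because `η ≥ n`, the others are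
at most `(1 + ψ_{d-n}) ε²` by mixing. Hence every bracket is at most `ψ_n ε + O(n ε²)`, and the
geometric weights `(1 - ε)^{N-q-1}` have total mass at most `N` and at most `1/ε`, while `N ε ≤ t`.
-/

open MeasureTheory Filter Set ENNReal

noncomputable section

/-- The full shift space on an alphabet with `a` symbols (modeling `{1,…,a}` by `Fin a`). -/
abbrev FullShift (a : ℕ) := ℤ → Fin a

/-- The left shift `(σ x)_k = x_{k+1}`. -/
def shift {a : ℕ} (x : FullShift a) : FullShift a := fun k => x (k + 1)

/-- Entry time to `U`: `τ_U(x) = inf {k ≥ 1 : σ^k x ∈ U}` (`∞` if the orbit never enters `U`). -/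
def entryTime {a : ℕ} (U : Set (FullShift a)) (x : FullShift a) : ℕ∞ :=
  ⨅ k ∈ {k : ℕ | 1 ≤ k ∧ shift^[k] x ∈ U}, (k : ℕ∞)

/-- Minimal return time `η = inf {τ_U(x) : x ∈ U}` (as a natural number; `0` if there is no return). -/
def minReturn {a : ℕ} (U : Set (FullShift a)) : ℕ :=
  sInf {k : ℕ | 1 ≤ k ∧ ∃ x ∈ U, shift^[k] x ∈ U}

/-- The sub-σ-algebra of the product σ-algebra generated by the coordinates in `s ⊆ ℤ`. -/
def coordMS {a : ℕ} (s : Set ℤ) : MeasurableSpace (FullShift a) :=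
  MeasurableSpace.comap (fun (x : FullShift a) (i : s) => x (i : ℤ)) inferInstance

/-- `μ` is ψ-mixing with rates `ψ`: `ψ Δ → 0` and for every set `U` measurable w.r.t. the
coordinates `{0,…,n−1}` and every `V` measurable w.r.t. the nonnegative coordinates,
`|μ(U ∩ σ^{-(Δ+n)}V) − μ(U)μ(V)| ≤ ψ_Δ μ(U) μ(V)`. -/
def PsiMixing {a : ℕ} (μ : Measure (FullShift a)) (ψ : ℕ → ℝ) : Prop :=
  Tendsto ψ atTop (nhds 0) ∧
    ∀ (n Δ : ℕ) (U V : Set (FullShift a)),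
      MeasurableSet[coordMS (Ico (0 : ℤ) (n : ℤ))] U →
      MeasurableSet[coordMS {i : ℤ | 0 ≤ i}] V →
      |(μ (U ∩ shift^[Δ + n] ⁻¹' V)).toReal - (μ U).toReal * (μ V).toReal| ≤
        ψ Δ * (μ U).toReal * (μ V).toReal

section Avoiding

variable {α : Type*} {f : α → α} {U : Set α}

variable (f U) in
def avoidingSet (I : Set ℕ) : Set α := ⋂ k ∈ I, (f^[k] ⁻¹' U)ᶜ

lemma mem_avoidingSet {I : Set ℕ} {x : α} : x ∈ avoidingSet f U I ↔ ∀ k ∈ I, f^[k] x ∉ U := by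
  simp [avoidingSet]

lemma avoidingSet_anti {I J : Set ℕ} (h : I ⊆ J) : avoidingSet f U J ⊆ avoidingSet f U I :=
  biInter_subset_biInter_left h

lemma preimage_avoidingSet (I : Set ℕ) :
    f ⁻¹' avoidingSet f U I = avoidingSet f U ((· + 1) '' I) := by
  ext x
  simp [mem_avoidingSet, Function.iterate_succ_apply]

lemma avoidingSet_Icc_succ (q : ℕ) :
    avoidingSet f U (Icc 1 (q + 1)) = avoidingSet f U (Icc 1 q) \ f^[q + 1] ⁻¹' U := by
  ext x
  simp only [mem_avoidingSet, Set.mem_sdiff, mem_preimage, mem_Icc]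
  refine ⟨fun h => ⟨fun k hk => h k ⟨hk.1, by omega⟩, h (q + 1) ⟨by omega, le_rfl⟩⟩, ?_⟩
  rintro ⟨h, hq⟩ k ⟨hk1, hk⟩
  rcases Nat.lt_or_eq_of_le hk with hk | rfl
  exacts [h k ⟨hk1, by omega⟩, hq]

lemma avoidingSet_subset_union {I J : Set ℕ} {K : Finset ℕ} (h : J ⊆ I ∪ K) :
    avoidingSet f U I ⊆ avoidingSet f U J ∪ ⋃ k ∈ K, f^[k] ⁻¹' U := by
  intro x hx
  by_contra hcon
  simp only [mem_union, mem_avoidingSet, mem_iUnion, mem_preimage, not_or, not_forall,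
    not_not, not_exists] at hcon
  obtain ⟨⟨k, hkJ, hkU⟩, hK⟩ := hcon
  rcases h hkJ with hkI | hkK
  exacts [mem_avoidingSet.mp hx k hkI hkU, hK k hkK hkU]

lemma measurableSet_avoidingSet [MeasurableSpace α] (hf : Measurable f) (hU : MeasurableSet U)
    (I : Set ℕ) : MeasurableSet (avoidingSet f U I) :=
  .biInter I.to_countable fun k _ => (hU.preimage (hf.iterate k)).compl

variable [MeasurableSpace α] {μ : Measure α}

lemma measureReal_avoidingSet_inter_le [IsFiniteMeasure μ] {I J : Set ℕ} {K : Finset ℕ}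
    (h : J ⊆ I ∪ K) (B : Set α) :
    μ.real (avoidingSet f U I ∩ B) ≤
      μ.real (avoidingSet f U J ∩ B) + ∑ k ∈ K, μ.real (f^[k] ⁻¹' U ∩ B) := by
  calc μ.real (avoidingSet f U I ∩ B)
      ≤ μ.real ((avoidingSet f U J ∩ B) ∪ ⋃ k ∈ K, f^[k] ⁻¹' U ∩ B) := by
        refine measureReal_mono ?_
        rw [← iUnion₂_inter, ← union_inter_distrib_right]
        exact inter_subset_inter_left B (avoidingSet_subset_union h)
    _ ≤ _ := (measureReal_union_le _ _).trans (by gcongr; exact measureReal_biUnion_finset_le _ _)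

lemma MeasureTheory.MeasurePreserving.measureReal_preimage_iterate_inter
    (hf : MeasurePreserving f μ μ) (hU : MeasurableSet U) (k d : ℕ) :
    μ.real (f^[k] ⁻¹' U ∩ f^[d + k] ⁻¹' U) = μ.real (U ∩ f^[d] ⁻¹' U) := by
  rw [Function.iterate_add, preimage_comp, ← preimage_inter]
  exact (hf.iterate k).measureReal_preimage
    (hU.inter (hU.preimage (hf.measurable.iterate d))).nullMeasurableSet

lemma measureReal_preimage_avoidingSet_inter_le [IsFiniteMeasure μ]
    (hf : MeasurePreserving f μ μ) (hU : MeasurableSet U) (n q : ℕ) :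
    μ.real (f ⁻¹' avoidingSet f U (Iio (q - 2 * n)) ∩ f^[q + 1] ⁻¹' U) ≤
      μ.real (avoidingSet f U (Icc 1 q) ∩ f^[q + 1] ⁻¹' U) +
        ∑ d ∈ Finset.Icc 1 (2 * n), μ.real (U ∩ f^[d] ⁻¹' U) := by
  have hcover :
      Icc 1 q ⊆ (· + 1) '' Iio (q - 2 * n) ∪ ↑(Finset.Ico (q + 1 - 2 * n) (q + 1)) := by
    intro k ⟨hk1, hkq⟩
    by_cases hk : k ≤ q - 2 * n
    · exact .inl ⟨k - 1, by simp only [mem_Iio]; omega, show k - 1 + 1 = k by omega⟩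
    · exact .inr (by simp only [Finset.coe_Ico, mem_Ico]; omega)
  rw [preimage_avoidingSet]
  refine (measureReal_avoidingSet_inter_le hcover _).trans (add_le_add_right ?_ _)
  calc ∑ k ∈ Finset.Ico (q + 1 - 2 * n) (q + 1), μ.real (f^[k] ⁻¹' U ∩ f^[q + 1] ⁻¹' U)
      = ∑ k ∈ Finset.Ico (q + 1 - 2 * n) (q + 1), μ.real (U ∩ f^[q + 1 - k] ⁻¹' U) := by
        refine Finset.sum_congr rfl fun k hk => ?_
        rw [← hf.measureReal_preimage_iterate_inter hU k, Nat.sub_add_cancel]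
        exact (Finset.mem_Ico.mp hk).2.le
    _ = ∑ d ∈ Finset.Ico (q + 2 - (q + 1)) (q + 2 - (q + 1 - 2 * n)),
          μ.real (U ∩ f^[d] ⁻¹' U) :=
        Finset.sum_Ico_reflect (fun d => μ.real (U ∩ f^[d] ⁻¹' U)) _ (Nat.le_succ _)
    _ ≤ ∑ d ∈ Finset.Icc 1 (2 * n), μ.real (U ∩ f^[d] ⁻¹' U) :=
        Finset.sum_le_sum_of_subset_of_nonneg
          (fun d hd => by simp only [Finset.mem_Ico, Finset.mem_Icc] at hd ⊢; omega)
          fun _ _ _ => measureReal_nonneg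

end Avoiding

section Shift

variable {a : ℕ}

lemma shift_iterate_apply (k : ℕ) (x : FullShift a) (j : ℤ) : shift^[k] x j = x (j + k) := by
  induction k generalizing x with
  | zero => simp
  | succ k ih =>
    rw [Function.iterate_succ_apply, ih, shift]
    push_cast
    ring_nf

lemma measurable_shift : Measurable (shift (a := a)) :=
  measurable_pi_lambda _ fun _ => measurable_pi_apply _

lemma coordMS_le (s : Set ℤ) : coordMS s ≤ (inferInstance : MeasurableSpace (FullShift a)) :=
  (measurable_pi_lambda _ fun _ => measurable_pi_apply _).comap_le

lemma measurableSet_coordMS_preimage_shift_iterate {s t : Set ℤ} {k : ℕ}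
    (h : ∀ j ∈ s, j + k ∈ t) {V : Set (FullShift a)} (hV : MeasurableSet[coordMS s] V) :
    MeasurableSet[coordMS t] (shift^[k] ⁻¹' V) := by
  have hcomp : (fun (x : FullShift a) (i : s) => x i) ∘ shift^[k] =
      (fun (y : t → Fin a) (i : s) => y ⟨i + k, h i i.2⟩) ∘
        fun (x : FullShift a) (i : t) => x i := by
    funext x i
    exact shift_iterate_apply k x i
  have hle : (coordMS s).comap (shift^[k]) ≤ (coordMS t : MeasurableSpace (FullShift a)) := by
    rw [coordMS, coordMS, MeasurableSpace.comap_comp, hcomp, ← MeasurableSpace.comap_comp]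
    exact MeasurableSpace.comap_mono
      (measurable_pi_lambda _ fun _ => measurable_pi_apply _).comap_le
  exact hle _ ⟨V, hV, rfl⟩

lemma measurableSet_coordMS_avoidingSet {s t : Set ℤ} {U : Set (FullShift a)} {I : Set ℕ}
    (hU : MeasurableSet[coordMS s] U) (h : ∀ k ∈ I, ∀ j ∈ s, j + k ∈ t) :
    MeasurableSet[coordMS t] (avoidingSet shift U I) :=
  .biInter I.to_countable fun k hk =>
    (measurableSet_coordMS_preimage_shift_iterate (h k hk) hU).compl

lemma setOf_lt_entryTime (U : Set (FullShift a)) (q : ℕ) :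
    {x | (q : ℕ∞) < entryTime U x} = avoidingSet shift U (Icc 1 q) := by
  ext x
  rw [mem_ofPred_eq, ← ENat.add_one_le_iff (ENat.natCast_ne_top q), entryTime, le_iInf₂_iff,
    mem_avoidingSet]
  refine forall_congr' fun k => ?_
  norm_cast
  simp only [mem_ofPred_eq, mem_Icc, and_imp]
  exact ⟨fun h hk1 hkq hkU => by have := h hk1 hkU; omega,
    fun h hk1 hkU => by_contra fun hkq => h hk1 (by omega) hkU⟩

lemma inter_preimage_shift_iterate_eq_empty {U : Set (FullShift a)} {d : ℕ} (hd : 1 ≤ d)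
    (hdη : d < minReturn U) : U ∩ shift^[d] ⁻¹' U = ∅ := by
  refine eq_empty_iff_forall_notMem.mpr fun x ⟨hxU, hdxU⟩ => ?_
  exact (Nat.sInf_le ⟨hd, x, hxU, hdxU⟩ : minReturn U ≤ d).not_gt hdη

end Shift

namespace PsiMixing

variable {a : ℕ} {μ : Measure (FullShift a)} {ψ : ℕ → ℝ}

lemma nonneg [IsProbabilityMeasure μ] (hmix : PsiMixing μ ψ) (Δ : ℕ) : 0 ≤ ψ Δ := by
  simpa using hmix.2 0 Δ univ univ MeasurableSet.univ MeasurableSet.univ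

variable {n Δ : ℕ} {U V : Set (FullShift a)}

lemma measureReal_inter_le (hmix : PsiMixing μ ψ)
    (hU : MeasurableSet[coordMS (Ico 0 (n : ℤ))] U)
    (hV : MeasurableSet[coordMS {i : ℤ | 0 ≤ i}] V) :
    μ.real (U ∩ shift^[Δ + n] ⁻¹' V) ≤ (1 + ψ Δ) * μ.real U * μ.real V := by
  have := (abs_le.mp (hmix.2 n Δ U V hU hV)).2
  simp only [← measureReal_def] at this
  linarith

lemma le_measureReal_inter (hmix : PsiMixing μ ψ)
    (hU : MeasurableSet[coordMS (Ico 0 (n : ℤ))] U)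
    (hV : MeasurableSet[coordMS {i : ℤ | 0 ≤ i}] V) :
    (1 - ψ Δ) * μ.real U * μ.real V ≤ μ.real (U ∩ shift^[Δ + n] ⁻¹' V) := by
  have := (abs_le.mp (hmix.2 n Δ U V hU hV)).1
  simp only [← measureReal_def] at this
  linarith

end PsiMixing

section Mixing

variable {a : ℕ} {μ : Measure (FullShift a)} {ψ : ℕ → ℝ} {n : ℕ} {U : Set (FullShift a)}

lemma measurableSet_coordMS_nonneg_of_Ico (hU : MeasurableSet[coordMS (Ico 0 (n : ℤ))] U) :
    MeasurableSet[coordMS {i : ℤ | 0 ≤ i}] U := by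
  simpa using measurableSet_coordMS_preimage_shift_iterate (k := 0)
    (fun j hj => by simpa using hj.1) hU

lemma sum_measureReal_inter_preimage_shift_iterate_le (hmix : PsiMixing μ ψ)
    (hU : MeasurableSet[coordMS (Ico 0 (n : ℤ))] U) (hη : n ≤ minReturn U) :
    ∑ d ∈ Finset.Icc 1 (2 * n), μ.real (U ∩ shift^[d] ⁻¹' U) ≤
      μ.real U ^ 2 * ∑ i ∈ Finset.range (n + 1), (1 + ψ i) := by
  classical
  have hshort : ∀ d ∈ Finset.Icc 1 (2 * n), μ.real (U ∩ shift^[d] ⁻¹' U) ≠ 0 → n ≤ d := by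
    intro d hd hne
    by_contra! hdn
    exact hne (by
      rw [inter_preimage_shift_iterate_eq_empty (Finset.mem_Icc.mp hd).1 (hdn.trans_le hη),
        measureReal_empty])
  calc ∑ d ∈ Finset.Icc 1 (2 * n), μ.real (U ∩ shift^[d] ⁻¹' U)
      = ∑ d ∈ (Finset.Icc 1 (2 * n)).filter (n ≤ ·), μ.real (U ∩ shift^[d] ⁻¹' U) :=
        (Finset.sum_filter_of_ne hshort).symm
    _ ≤ ∑ d ∈ Finset.Ico n (n + (n + 1)), μ.real (U ∩ shift^[d] ⁻¹' U) :=
        Finset.sum_le_sum_of_subset_of_nonneg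
          (fun d hd => by
            simp only [Finset.mem_filter, Finset.mem_Icc, Finset.mem_Ico] at hd ⊢
            omega)
          fun _ _ _ => measureReal_nonneg
    _ = ∑ i ∈ Finset.range (n + 1), μ.real (U ∩ shift^[i + n] ⁻¹' U) := by
        rw [Finset.sum_Ico_eq_sum_range, Nat.add_sub_cancel_left]
        simp only [add_comm n]
    _ ≤ ∑ i ∈ Finset.range (n + 1), μ.real U ^ 2 * (1 + ψ i) :=
        Finset.sum_le_sum fun i _ =>
          (hmix.measureReal_inter_le hU (measurableSet_coordMS_nonneg_of_Ico hU)).trans_eq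
            (by ring)
    _ = μ.real U ^ 2 * ∑ i ∈ Finset.range (n + 1), (1 + ψ i) := (Finset.mul_sum ..).symm

lemma measureReal_avoidingSet_succ_sub_le [IsProbabilityMeasure μ]
    (hinv : MeasurePreserving shift μ μ) (hmix : PsiMixing μ ψ)
    (hU : MeasurableSet[coordMS (Ico 0 (n : ℤ))] U) {q : ℕ} (hq : n ≤ q) :
    μ.real (avoidingSet shift U (Icc 1 (q + 1))) -
        (1 - μ.real U) * μ.real (avoidingSet shift U (Icc 1 q)) ≤
      ψ n * μ.real U + ∑ d ∈ Finset.Icc 1 (2 * n), μ.real (U ∩ shift^[d] ⁻¹' U) := by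
  set T := avoidingSet shift U (Icc 1 q)
  set A := avoidingSet shift U (Iio (q - 2 * n))
  have hUm : MeasurableSet U := coordMS_le _ _ hU
  have hAm : MeasurableSet A := measurableSet_avoidingSet measurable_shift hUm _
  have hsplit :
      μ.real (avoidingSet shift U (Icc 1 (q + 1))) + μ.real (T ∩ shift^[q + 1] ⁻¹' U) =
        μ.real T := by
    rw [avoidingSet_Icc_succ]
    exact measureReal_sdiff_add_inter (hUm.preimage (measurable_shift.iterate _))
  have hTA : μ.real T ≤ μ.real A := by
    rw [← hinv.measureReal_preimage hAm.nullMeasurableSet, preimage_avoidingSet]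
    refine measureReal_mono (avoidingSet_anti ?_)
    rintro _ ⟨k, hk, rfl⟩
    simp only [mem_Iio, mem_Icc] at hk ⊢
    omega
  have hAcoord : MeasurableSet[coordMS (Ico 0 ((q - n : ℕ) : ℤ))] A :=
    measurableSet_coordMS_avoidingSet hU fun k hk j hj => by
      simp only [mem_Iio, mem_Ico] at hk hj ⊢
      omega
  have hmixA :=
    hmix.le_measureReal_inter (Δ := n) hAcoord (measurableSet_coordMS_nonneg_of_Ico hU)
  rw [Nat.add_sub_cancel' hq] at hmixA
  have hshiftA : μ.real (A ∩ shift^[q] ⁻¹' U) =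
      μ.real (shift ⁻¹' A ∩ shift^[q + 1] ⁻¹' U) := by
    rw [Function.iterate_succ, preimage_comp, ← preimage_inter, hinv.measureReal_preimage
      (hAm.inter (hUm.preimage (measurable_shift.iterate q))).nullMeasurableSet]
  have hdrop := measureReal_preimage_avoidingSet_inter_le hinv hUm n q
  have hψA : ψ n * μ.real A * μ.real U ≤ ψ n * μ.real U := by
    rw [mul_right_comm]
    exact mul_le_of_le_one_right (mul_nonneg (hmix.nonneg n) measureReal_nonneg)
      measureReal_le_one
  have : μ.real U * μ.real T ≤ μ.real U * μ.real A :=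
    mul_le_mul_of_nonneg_left hTA measureReal_nonneg
  linarith

end Mixing

lemma sum_geom_weight_mul_le {ε c D : ℝ} (hε0 : 0 ≤ ε) (hε1 : ε ≤ 1) (hc : 0 ≤ c) (hD : 0 ≤ D)
    (n N : ℕ) :
    ∑ q ∈ Finset.Ico n N, (1 - ε) ^ (N - q - 1) * (c * ε + D) ≤ c + N * D := by
  set G := ∑ q ∈ Finset.Ico n N, (1 - ε) ^ (N - q - 1)
  have hG_le_range : G ≤ ∑ j ∈ Finset.range N, (1 - ε) ^ j := by
    rw [← Finset.sum_range_reflect]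
    simp only [Nat.sub_sub, add_comm 1, G]
    exact Finset.sum_le_sum_of_subset_of_nonneg
      (fun q hq => Finset.mem_range.mpr (Finset.mem_Ico.mp hq).2) fun _ _ _ => by positivity
  have hGε : G * ε ≤ 1 := by
    have := mul_neg_geom_sum (1 - ε) N
    have : 0 ≤ (1 - ε) ^ N := by positivity
    nlinarith
  have hGN : G ≤ N := by
    refine hG_le_range.trans ?_
    simpa using Finset.sum_le_card_nsmul (Finset.range N) (fun j => (1 - ε) ^ j) 1 fun j _ =>
      pow_le_one₀ (by linarith) (by linarith)
  calc ∑ q ∈ Finset.Ico n N, (1 - ε) ^ (N - q - 1) * (c * ε + D) = c * (G * ε) + G * D := by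
        rw [← Finset.sum_mul]; ring
    _ ≤ c + N * D := by nlinarith

lemma Nat.floor_div_mul_le {K : Type*} [Field K] [LinearOrder K] [IsStrictOrderedRing K]
    [FloorSemiring K] {t : K} (ht : 0 ≤ t) (ε : K) : (⌊t / ε⌋₊ : K) * ε ≤ t := by
  rcases le_or_gt ε 0 with hε | hε
  · rw [Nat.floor_eq_zero.mpr ((div_nonpos_of_nonneg_of_nonpos ht hε).trans_lt one_pos)]
    simpa using ht
  · exact (le_div_iff₀ hε).mp (Nat.floor_le (div_nonneg ht hε.le))

theorem S2_bound_general
    (a : ℕ)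
    (μ : Measure (FullShift a)) [IsProbabilityMeasure μ]
    (hinv : MeasurePreserving (shift (a := a)) μ μ)
    (ψ : ℕ → ℝ) (hmix : PsiMixing μ ψ)
    (n : ℕ) (U : Set (FullShift a))
    (hUmeas : MeasurableSet[coordMS (Ico (0 : ℤ) (n : ℤ))] U)
    (ε : ℝ) (hε : ε = (μ U).toReal)
    (hη : n ≤ minReturn U)
    (t : ℝ) (ht : 0 < t)
    (N : ℕ) (hN : N = ⌊t / ε⌋₊) :
    ∑ q ∈ Finset.Ico n N,
        (1 - ε) ^ (N - q - 1) *
          ((μ {x | ((q + 1 : ℕ) : ℕ∞) < entryTime U x}).toReal -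
            (1 - ε) * (μ {x | (q : ℕ∞) < entryTime U x}).toReal) ≤
      4 * ((n : ℝ) + 1) * (t + 1) * ε + (t + 1) * ψ n +
        (N : ℝ) * ε ^ 2 * ∑ i ∈ Finset.range n, ψ i := by
  rw [← measureReal_def] at hε
  simp only [setOf_lt_entryTime, ← measureReal_def]
  subst hε
  have hR := sum_measureReal_inter_preimage_shift_iterate_le hmix hUmeas hη
  simp only [Finset.sum_add_distrib, Finset.sum_const, Finset.card_range, Finset.sum_range_succ,
    nsmul_eq_mul, mul_one] at hR
  push_cast at hR
  set ε := μ.real U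
  set R := ∑ d ∈ Finset.Icc 1 (2 * n), μ.real (U ∩ shift^[d] ⁻¹' U)
  have hε0 : 0 ≤ ε := measureReal_nonneg
  have hε1 : ε ≤ 1 := measureReal_le_one
  have hψ := hmix.nonneg
  have hNε : N * ε ≤ t := hN ▸ Nat.floor_div_mul_le ht.le ε
  calc _ ≤ ∑ q ∈ Finset.Ico n N, (1 - ε) ^ (N - q - 1) * (ψ n * ε + R) :=
        Finset.sum_le_sum fun q hq => mul_le_mul_of_nonneg_left
          (measureReal_avoidingSet_succ_sub_le hinv hmix hUmeas (Finset.mem_Ico.mp hq).1)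
          (pow_nonneg (sub_nonneg.mpr hε1) _)
    _ ≤ ψ n + N * R :=
        sum_geom_weight_mul_le hε0 hε1 (hψ n) (Finset.sum_nonneg fun _ _ => measureReal_nonneg) n N
    _ ≤ ψ n + N * (ε ^ 2 * (n + 1 + (∑ i ∈ Finset.range n, ψ i + ψ n))) := by gcongr
    _ ≤ _ := by
        have h1 : N * ε * (ε * (n + 1)) ≤ t * (ε * (n + 1)) :=
          mul_le_mul_of_nonneg_right hNε (by positivity)
        have h2 : N * ε * (ε * ψ n) ≤ t * (1 * ψ n) :=
          mul_le_mul hNε (mul_le_mul_of_nonneg_right hε1 (hψ n)) (mul_nonneg hε0 (hψ n)) ht.le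
        have h3 : 0 ≤ (n + 1) * ε * (3 * t + 4) := by positivity
        linarith

/-- Lemma 4.5 of the paper: the bound on `S₂(N)`. -/
theorem S2_bound
    (a : ℕ) (ha : 2 ≤ a)
    (𝒳 : Set (FullShift a)) (h𝒳closed : IsClosed 𝒳) (h𝒳inv : shift ⁻¹' 𝒳 = 𝒳)
    (μ : Measure (FullShift a)) [IsProbabilityMeasure μ] (hμ𝒳 : μ 𝒳 = 1)
    (hinv : MeasurePreserving (shift (a := a)) μ μ)
    (ψ : ℕ → ℝ) (hmix : PsiMixing μ ψ)
    (n : ℕ) (U : Set (FullShift a))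
    (hUmeas : MeasurableSet[coordMS (Ico (0 : ℤ) (n : ℤ))] U)
    (ε : ℝ) (hε : ε = (μ U).toReal) (hεpos : 0 < ε)
    (hη : n ≤ minReturn U)
    (t : ℝ) (ht : 0 < t)
    (N : ℕ) (hN : N = ⌊t / ε⌋₊) :
    ∑ q ∈ Finset.Ico n N,
        (1 - ε) ^ (N - q - 1) *
          ((μ {x | ((q + 1 : ℕ) : ℕ∞) < entryTime U x}).toReal -
            (1 - ε) * (μ {x | (q : ℕ∞) < entryTime U x}).toReal) ≤
      4 * ((n : ℝ) + 1) * (t + 1) * ε + (t + 1) * ψ n +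
        (N : ℝ) * ε ^ 2 * ∑ i ∈ Finset.range n, ψ i :=
  S2_bound_general a μ hinv ψ hmix n U hUmeas ε hε hη t ht N hN
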